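/- Let n be a positive integer and X ∈ 𝒯(n) a triangulation of the punctured n-gon. Let j < j' be integers with j' − j ≥ 2 such that the projective arcs at the residue classes of j and of j' belong to X, and such that for every integer m with j < m < j' the projective arc at the residue class of m does not belong to X. Then the inner arc (j mod n, j' − j) belongs to X. (Adachi: between two consecutive projective arcs at distance greater than 1, the triangulation must contain the connecting inner arc; in particular j' − j ≤ n.) -/

import Mathlib

/-!
Combinatorial model of admissible arcs and triangulations of a regular
`n`-gon with one puncture (following Adachi, "The classification of
τ-tilting modules over Nakayama algebras").
-/

namespace Punctured

/-- Admissible arcs in a regular `n`-gon with one puncture: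
an *inner arc* `inner i t` runs counterclockwise from vertex `i` to vertex
`i + t` (with `2 ≤ t ≤ n` required for admissibility); a *projective arc*
`proj j` runs from the puncture to the vertex `j`. -/
inductive Arc (n : ℕ) : Type
  | inner (i : ZMod n) (t : ℕ) : Arc n
  | proj (j : ZMod n) : Arc n

namespace Arc

/-- The terminal point of an admissible arc. -/
def terminal {n : ℕ} : Arc n → ZMod n
  | .inner i t => i + (t : ZMod n)
  | .proj j => j

/-- Admissibility: inner arcs must have length `2 ≤ t ≤ n`. -/
def IsAdmissible {n : ℕ} : Arc n → Prop
  | .inner _ t => 2 ≤ t ∧ t ≤ n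
  | .proj _ => True

/-- Compatibility (non-crossing) of two admissible arcs, defined via
lifts to `ℤ`. -/
def Compatible {n : ℕ} : Arc n → Arc n → Prop
  | .inner i t, .inner k s =>
      ¬ ∃ x y : ℤ, (x : ZMod n) = i ∧ (y : ZMod n) = k ∧
        ((x < y ∧ y < x + (t : ℤ) ∧ x + (t : ℤ) < y + (s : ℤ)) ∨
         (y < x ∧ x < y + (s : ℤ) ∧ y + (s : ℤ) < x + (t : ℤ)))
  | .inner i t, .proj j =>
      ¬ ∃ x y : ℤ, (x : ZMod n) = i ∧ (y : ZMod n) = j ∧ x < y ∧ y < x + (t : ℤ)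
  | .proj j, .inner i t =>
      ¬ ∃ x y : ℤ, (x : ZMod n) = i ∧ (y : ZMod n) = j ∧ x < y ∧ y < x + (t : ℤ)
  | .proj _, .proj _ => True

end Arc

/-- A set of admissible arcs which is pairwise compatible. -/
def PairwiseCompatible (n : ℕ) (X : Set (Arc n)) : Prop :=
  (∀ a ∈ X, a.IsAdmissible) ∧ ∀ a ∈ X, ∀ b ∈ X, a.Compatible b

/-- A triangulation of the punctured `n`-gon: a pairwise compatible set of
admissible arcs, maximal under inclusion among such sets. -/
def IsTriangulation (n : ℕ) (X : Set (Arc n)) : Prop :=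
  PairwiseCompatible n X ∧
    ∀ Y : Set (Arc n), PairwiseCompatible n Y → X ⊆ Y → Y = X

/-- `top(X)`: for each residue class `c`, the number of arcs of `X` with
terminal point `c`. -/
noncomputable def topSeq (n : ℕ) (X : Set (Arc n)) : ZMod n → ℕ :=
  fun c => {arc ∈ X | Arc.terminal arc = c}.ncard

/-- The representative of `p` modulo `n` lying in `{1, …, n}`. -/
def resRep (n : ℕ) (p : ℤ) : ℕ := ((p - 1) % (n : ℤ)).toNat + 1

/-- `a'_p := Σ_{j=1}^{(p)_n} (a_j - 1)`, the `n`-periodic extension of the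
partial-sum sequence of `a`. -/
def psum (n : ℕ) (a : ZMod n → ℕ) (p : ℤ) : ℤ :=
  ∑ j ∈ Finset.Icc 1 (resRep n p), ((a ((j : ℕ) : ZMod n) : ℤ) - 1)

/-- `‖a'‖ := max {a'_1, …, a'_n}`. -/
noncomputable def pnorm (n : ℕ) (a : ZMod n → ℕ) : ℤ :=
  sSup ((fun i : ℕ => psum n a (i : ℤ)) '' Set.Icc 1 n)

/-- `δ_p = 1` if `a'_p = ‖a'‖` and `δ_p = 0` otherwise. -/
noncomputable def deltaInt (n : ℕ) (a : ZMod n → ℕ) (p : ℤ) : ℤ :=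
  if psum n a p = pnorm n a then 1 else 0

/-- `k_s^j := max {k ∈ ℤ : k < j - 1 and a'_k = a'_{j-1} + s}`. -/
noncomputable def kmax (n : ℕ) (a : ZMod n → ℕ) (j s : ℤ) : ℤ :=
  sSup {k : ℤ | k < j - 1 ∧ psum n a k = psum n a (j - 1) + s}

/-- `ℓ_j(a)`. -/
noncomputable def ellj (n : ℕ) (a : ZMod n → ℕ) (j : ℕ) : ℤ :=
  if (a ((j : ℕ) : ZMod n) : ℤ) - deltaInt n a (j : ℤ) = 0 then 0
  else (j : ℤ) - kmax n a (j : ℤ) ((a ((j : ℕ) : ZMod n) : ℤ) - deltaInt n a (j : ℤ))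

/-!
The inner arc `γ` from `j` to `j'` is compatible with every arc of `X`, so it lies in `X` by
maximality. A projective arc crossing `γ` would end strictly between `j` and `j'`, which is
excluded; an inner arc crossing `γ` would cross one of the projective arcs at `j` or `j'`.
Admissibility `j' - j ≤ n` holds because otherwise `j + n` would be such an intermediate vertex.
-/

namespace Arc

variable {n : ℕ}

theorem Compatible.symm {a b : Arc n} (h : a.Compatible b) : b.Compatible a := by
  cases a <;> cases b
  · rintro ⟨x, y, hx, hy, hcross⟩
    exact h ⟨y, x, hy, hx, hcross.symm⟩
  all_goals exact h

theorem compatible_inner_self {i : ZMod n} {t : ℕ} (ht : t ≤ n) :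
    (inner i t).Compatible (inner i t) := by
  rintro ⟨x, y, hx, hy, hcross⟩
  have hdvd : (n : ℤ) ∣ y - x := (ZMod.intCast_eq_intCast_iff_dvd_sub x y n).1 (hx.trans hy.symm)
  have hdvd' : (n : ℤ) ∣ x - y := by simpa using hdvd.neg_right
  rcases hcross with h | h
  · have := Int.le_of_dvd (by omega) hdvd
    omega
  · have := Int.le_of_dvd (by omega) hdvd'
    omega

theorem compatible_inner_proj_of_forall_ne {i c : ZMod n} {t : ℕ}
    (h : ∀ m : ℤ, 0 < m → m < t → i + m ≠ c) : (inner i t).Compatible (proj c) := by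
  rintro ⟨x, y, hx, hy, hxy, hyt⟩
  exact h (y - x) (by omega) (by omega) (by rw [← hx, ← hy]; push_cast; ring)

theorem compatible_inner_of_compatible_proj_endpoints {i k : ZMod n} {t s : ℕ}
    (hstart : (inner k s).Compatible (proj i)) (hend : (inner k s).Compatible (proj (i + t))) :
    (inner i t).Compatible (inner k s) := by
  rintro ⟨x, y, hx, hy, h | h⟩
  · exact hend ⟨y, x + t, hy, by push_cast; rw [hx], h.2.1, h.2.2⟩
  · exact hstart ⟨y, x, hy, hx, h.1, h.2.1⟩

end Arc

theorem IsTriangulation.mem_of_forall_compatible {n : ℕ} {X : Set (Arc n)}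
    (hX : IsTriangulation n X) {a : Arc n} (ha : a.IsAdmissible) (haa : a.Compatible a)
    (haX : ∀ b ∈ X, a.Compatible b) : a ∈ X := by
  have hY : PairwiseCompatible n (insert a X) := by
    refine ⟨fun b hb => ?_, fun b hb c hc => ?_⟩
    · rcases hb with rfl | hb
      exacts [ha, hX.1.1 b hb]
    · rcases hb with rfl | hb <;> rcases hc with rfl | hc
      exacts [haa, haX c hc, (haX b hb).symm, hX.1.2 b hb c hc]
  exact hX.2 _ hY (Set.subset_insert a X) ▸ Set.mem_insert a X

theorem inner_between_consecutive_proj_general (n : ℕ) (hn : 0 < n)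
    (X : Set (Arc n)) (hX : IsTriangulation n X)
    (j j' : ℤ) (h2 : 2 ≤ j' - j)
    (hj : Arc.proj ((j : ℤ) : ZMod n) ∈ X)
    (hj' : Arc.proj ((j' : ℤ) : ZMod n) ∈ X)
    (hmid : ∀ m : ℤ, j < m → m < j' → Arc.proj ((m : ℤ) : ZMod n) ∉ X) :
    Arc.inner ((j : ℤ) : ZMod n) (j' - j).toNat ∈ X := by
  obtain ⟨t, rfl⟩ : ∃ t : ℕ, j' = j + t := ⟨(j' - j).toNat, by omega⟩
  rw [show (j + t - j).toNat = t by omega]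
  have htn : t ≤ n := by
    by_contra htn
    exact hmid (j + n) (by omega) (by omega) (by simpa using hj)
  refine hX.mem_of_forall_compatible ⟨by omega, htn⟩ (Arc.compatible_inner_self htn) ?_
  rintro (⟨k, s⟩ | c) hb
  · refine Arc.compatible_inner_of_compatible_proj_endpoints (hX.1.2 _ hb _ hj) ?_
    simpa using hX.1.2 _ hb _ hj'
  · refine Arc.compatible_inner_proj_of_forall_ne fun m hm hmt hc => ?_
    exact hmid (j + m) (by omega) (by omega) (by push_cast; rwa [hc])

/-- **Adachi.** Let `X` be a triangulation of the punctured `n`-gon, and let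
`j < j'` be integers with `j' − j ≥ 2` such that the projective arcs at the
residue classes of `j` and `j'` belong to `X`, while for every integer `m`
with `j < m < j'` the projective arc at the residue class of `m` does not
belong to `X`. Then the inner arc `(j mod n, j' − j)` belongs to `X`. -/
theorem inner_between_consecutive_proj (n : ℕ) (hn : 0 < n)
    (X : Set (Arc n)) (hX : IsTriangulation n X)
    (j j' : ℤ) (hlt : j < j') (h2 : 2 ≤ j' - j)
    (hj : Arc.proj ((j : ℤ) : ZMod n) ∈ X)
    (hj' : Arc.proj ((j' : ℤ) : ZMod n) ∈ X)
    (hmid : ∀ m : ℤ, j < m → m < j' → Arc.proj ((m : ℤ) : ZMod n) ∉ X) :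
    Arc.inner ((j : ℤ) : ZMod n) (j' - j).toNat ∈ X :=
  inner_between_consecutive_proj_general n hn X hX j j' h2 hj hj' hmid

end Punctured
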